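/- Let C be a graded coalgebra with dim C_0 = 1 and finite-dimensional components, M_* = (1)^⊥ ⊂ C^{*g} the augmentation ideal of the dual algebra. Then the orthogonal of C_{deg_p ≤ n} = K·1 ⊕ Ker(Δ̃^n) in the duality between C and C^{*g} equals M_*^{n+1}. -/

import Mathlib

open Module TensorProduct

variable (K : Type) [Field K] (C : Type) [AddCommGroup C] [Module K C]

/-- Left-nested tensor powers: `TP 0 = C`, `TP (n+1) = TP n ⊗ C`, so `TP n = C^{⊗(n+1)}`. -/
noncomputable def TPM : ℕ → ModuleCat K
  | 0 => ModuleCat.of K C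
  | n + 1 => ModuleCat.of K (TPM n ⊗[K] C)

/-- The underlying type of `TPM`. -/
noncomputable abbrev TP (n : ℕ) : Type := TPM K C n

/-- Iterates of a map `D : C → C ⊗ C`: `iterD n = Δ̃ⁿ` when `D = Δ̃`. -/
noncomputable def iterD (D : C →ₗ[K] C ⊗[K] C) : (n : ℕ) → (C →ₗ[K] TP K C n)
  | 0 => LinearMap.id
  | n + 1 => (TensorProduct.map (iterD D n) (LinearMap.id : C →ₗ[K] C)).comp D

/-- The degree-`n` component of the graded dual. -/
def dualComponent (𝒞 : ℕ → Submodule K C) (n : ℕ) : Submodule K (Module.Dual K C) :=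
  ⨅ m ∈ {m : ℕ | m ≠ n}, Submodule.dualAnnihilator (𝒞 m)

/-- The graded dual `C^{*g} = ⊕ₙ (C_n)*`. -/
def gradedDual (𝒞 : ℕ → Submodule K C) : Submodule K (Module.Dual K C) :=
  ⨆ n, dualComponent K C 𝒞 n

variable [Coalgebra K C]

/-- The reduced coproduct `Δ̃(x) = Δ(x) − e ⊗ x − x ⊗ e`. -/
noncomputable def redComul (e : C) : C →ₗ[K] C ⊗[K] C :=
  CoalgebraStruct.comul - TensorProduct.mk K C C e - (TensorProduct.mk K C C).flip e

/-- The image of `p ⊗ q` inside `C ⊗ C`. -/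
noncomputable def tensorSub (p q : Submodule K C) : Submodule K (C ⊗[K] C) :=
  LinearMap.range (TensorProduct.map p.subtype q.subtype)

/-- The convolution product on `C*`, `(f g)(x) = (f ⊗ g)(Δ x)`, as a bilinear map. -/
noncomputable def convL : Module.Dual K C →ₗ[K] Module.Dual K C →ₗ[K] Module.Dual K C :=
  LinearMap.mk₂ K
    (fun f g => (LinearMap.mul' K K) ∘ₗ (TensorProduct.map f g) ∘ₗ
      (CoalgebraStruct.comul (R := K) (A := C)))
    (fun f₁ f₂ g => by simp only [TensorProduct.map_add_left, LinearMap.add_comp, LinearMap.comp_add])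
    (fun c f g => by simp only [TensorProduct.map_smul_left, LinearMap.smul_comp, LinearMap.comp_smul])
    (fun f g₁ g₂ => by simp only [TensorProduct.map_add_right, LinearMap.add_comp, LinearMap.comp_add])
    (fun c f g => by simp only [TensorProduct.map_smul_right, LinearMap.smul_comp, LinearMap.comp_smul])

/-- Powers `M_*^{n+1}` of the augmentation ideal `M_* = (1)^⊥` of `C^{*g}`:
`Mpow 0 = M_*`, `Mpow (n+1) = M_* · Mpow n` (products for the convolution). -/
noncomputable def Mpow (𝒞 : ℕ → Submodule K C) (one : C) : ℕ → Submodule K (Module.Dual K C)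
  | 0 => gradedDual K C 𝒞 ⊓ Submodule.dualAnnihilator (Submodule.span K {one})
  | n + 1 => Submodule.map₂ (convL K C)
      (gradedDual K C 𝒞 ⊓ Submodule.dualAnnihilator (Submodule.span K {one}))
      (Mpow 𝒞 one n)

/-!
For `f₀, …, fₙ` vanishing at `1`, the convolution product is computed by the reduced coproduct:
`(f₀ ⋯ fₙ)(x) = (f₀ ⊗ ⋯ ⊗ fₙ)(Δ̃ⁿ x)`. This gives `M_*^{n+1} ⊆ (K·1 ⊕ Ker Δ̃ⁿ)^⊥` at once.

Conversely, a functional `φ` of the graded dual vanishing on `1` and on `Ker Δ̃ⁿ` only sees the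
degrees below some `N`. Since `C₀ = K·1`, the counit axiom forces the `C₀ ⊗ Cⱼ` and `Cⱼ ⊗ C₀`
components of `Δ x` (for `x ∈ Cⱼ`, `j > 0`) to be `1 ⊗ x` and `x ⊗ 1`, so `Δ̃` maps the
finite-dimensional space `U = C₁ ⊕ ⋯ ⊕ C_{N-1}` into `U ⊗ U`. On `U`, `φ` factors through `Δ̃ⁿ`
as a functional on `U^{⊗(n+1)}`, which is a sum of tensor products of functionals on `U`; each of
these extends to an element of `M_*`, and so `φ` agrees on `U` with some `F ∈ M_*^{n+1}`. Finally
`φ` is the sum of the homogeneous components of `F` of degree `< N`, and these lie in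
`M_*^{n+1}` because `M_*^{n+1}` is a graded subspace of `C^{*g}`.
-/

section GradedProj

variable {R M ι : Type*} [Semiring R] [AddCommMonoid M] [Module R M] [DecidableEq ι]
  (𝓜 : ι → Submodule R M) [DirectSum.Decomposition 𝓜]

noncomputable def gradedProj (i : ι) : M →ₗ[R] M :=
  (𝓜 i).subtype ∘ₗ DirectSum.component R ι (fun i => 𝓜 i) i ∘ₗ
    (DirectSum.decomposeLinearEquiv 𝓜).toLinearMap

variable {𝓜}

theorem gradedProj_apply_mem (i : ι) (x : M) : gradedProj 𝓜 i x ∈ 𝓜 i :=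
  Submodule.coe_mem _

theorem gradedProj_of_mem_same {i : ι} {x : M} (hx : x ∈ 𝓜 i) : gradedProj 𝓜 i x = x :=
  DirectSum.decompose_of_mem_same 𝓜 hx

theorem gradedProj_of_mem_ne {i j : ι} {x : M} (hx : x ∈ 𝓜 i) (hij : i ≠ j) :
    gradedProj 𝓜 j x = 0 :=
  DirectSum.decompose_of_mem_ne 𝓜 hx hij

theorem gradedProj_sum_of_injOn {α : Type*} {s : Finset α} {deg : α → ι}
    (hdeg : Set.InjOn deg s) {y : α → M} (hy : ∀ a ∈ s, y a ∈ 𝓜 (deg a)) {a : α} (ha : a ∈ s) :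
    gradedProj 𝓜 (deg a) (∑ b ∈ s, y b) = y a := by
  rw [map_sum, Finset.sum_eq_single_of_mem a ha, gradedProj_of_mem_same (hy a ha)]
  exact fun b hb hba => gradedProj_of_mem_ne (hy b hb) fun h => hba (hdeg hb ha h)

theorem sum_gradedProj_of_mem_iSup {s : Finset ι} {x : M} (hx : x ∈ ⨆ i ∈ s, 𝓜 i) :
    ∑ i ∈ s, gradedProj 𝓜 i x = x := by
  obtain ⟨y, rfl⟩ := (Submodule.mem_iSup_finset_iff_exists_sum _ _).mp hx
  exact Finset.sum_congr rfl fun i hi =>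
    gradedProj_sum_of_injOn (deg := id) (Set.injOn_id _) (fun j _ => (y j).2) hi

end GradedProj

section GradedDual

variable {K} {V : Type} [AddCommGroup V] [Module K V] {𝒱 : ℕ → Submodule K V}

theorem mem_dualComponent_iff {f : Module.Dual K V} {n : ℕ} :
    f ∈ dualComponent K V 𝒱 n ↔ ∀ m ≠ n, ∀ x ∈ 𝒱 m, f x = 0 := by
  simp [dualComponent, Submodule.mem_dualAnnihilator]

theorem dualComponent_le_gradedDual (n : ℕ) : dualComponent K V 𝒱 n ≤ gradedDual K V 𝒱 :=
  le_iSup (dualComponent K V 𝒱) n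

variable [DirectSum.Decomposition 𝒱]

theorem comp_gradedProj_mem_dualComponent (f : Module.Dual K V) (j : ℕ) :
    f ∘ₗ gradedProj 𝒱 j ∈ dualComponent K V 𝒱 j :=
  mem_dualComponent_iff.mpr fun _ hm _ hx => by
    rw [LinearMap.comp_apply, gradedProj_of_mem_ne hx hm, map_zero]

theorem comp_gradedProj_of_mem_dualComponent {f : Module.Dual K V} {j : ℕ}
    (hf : f ∈ dualComponent K V 𝒱 j) : f ∘ₗ gradedProj 𝒱 j = f := by
  ext x
  induction x using DirectSum.Decomposition.inductionOn 𝒱 with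
  | zero => simp
  | @homogeneous i y =>
    rcases eq_or_ne i j with rfl | hij
    · rw [LinearMap.comp_apply, gradedProj_of_mem_same y.2]
    · rw [LinearMap.comp_apply, gradedProj_of_mem_ne y.2 hij, map_zero,
        mem_dualComponent_iff.mp hf i hij y y.2]
  | add y z hy hz => simp only [map_add, hy, hz]

theorem comp_gradedProj_of_mem_dualComponent_of_ne {f : Module.Dual K V} {i j : ℕ}
    (hf : f ∈ dualComponent K V 𝒱 i) (hij : i ≠ j) : f ∘ₗ gradedProj 𝒱 j = 0 := by
  ext x
  exact mem_dualComponent_iff.mp hf j hij.symm _ (gradedProj_apply_mem j x)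

theorem eq_sum_comp_gradedProj_of_mem_iSup {s : Finset ℕ} {f : Module.Dual K V}
    (hf : f ∈ ⨆ j ∈ s, dualComponent K V 𝒱 j) : f = ∑ j ∈ s, f ∘ₗ gradedProj 𝒱 j := by
  obtain ⟨g, rfl⟩ := (Submodule.mem_iSup_finset_iff_exists_sum _ _).mp hf
  refine Finset.sum_congr rfl fun j hj => ?_
  ext x
  rw [LinearMap.comp_apply, LinearMap.sum_apply, Finset.sum_eq_single_of_mem j hj]
  · exact (LinearMap.congr_fun (comp_gradedProj_of_mem_dualComponent (g j).2) x).symm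
  · exact fun i _ hij =>
      LinearMap.congr_fun (comp_gradedProj_of_mem_dualComponent_of_ne (g i).2 hij) x

theorem exists_eq_sum_range_comp_gradedProj {f : Module.Dual K V} (hf : f ∈ gradedDual K V 𝒱) :
    ∃ N, f = ∑ j ∈ Finset.range N, f ∘ₗ gradedProj 𝒱 j := by
  obtain ⟨s, hs⟩ := Submodule.mem_iSup_iff_exists_finset.mp hf
  have hle : (⨆ j ∈ s, dualComponent K V 𝒱 j) ≤
      ⨆ j ∈ Finset.range (s.sup id + 1), dualComponent K V 𝒱 j :=
    biSup_mono fun j hj => Finset.mem_range.mpr (Nat.lt_succ_of_le (Finset.le_sup (f := id) hj))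
  exact ⟨_, eq_sum_comp_gradedProj_of_mem_iSup (hle hs)⟩

end GradedDual

section AugmentationIdeal

variable {K} {V : Type} [AddCommGroup V] [Module K V] (𝒱 : ℕ → Submodule K V) (one : V)

/-- The augmentation ideal `M_* = (1)^⊥` of the graded dual. -/
def augIdeal : Submodule K (Module.Dual K V) :=
  gradedDual K V 𝒱 ⊓ (K ∙ one).dualAnnihilator

variable {𝒱 one}

theorem mem_dualAnnihilator_span_singleton {f : Module.Dual K V} {v : V} :
    f ∈ (K ∙ v).dualAnnihilator ↔ f v = 0 := by
  refine ⟨fun h => ?_, fun h => ?_⟩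
  · exact (Submodule.mem_dualAnnihilator f).mp h v (Submodule.mem_span_singleton_self v)
  · refine (Submodule.mem_dualAnnihilator f).mpr fun w hw => ?_
    obtain ⟨c, rfl⟩ := Submodule.mem_span_singleton.mp hw
    rw [map_smul, h, smul_zero]

theorem mem_augIdeal {f : Module.Dual K V} :
    f ∈ augIdeal 𝒱 one ↔ f ∈ gradedDual K V 𝒱 ∧ f one = 0 :=
  Submodule.mem_inf.trans (and_congr_right fun _ => mem_dualAnnihilator_span_singleton)

theorem dualComponent_le_augIdeal (hone0 : one ∈ 𝒱 0) {j : ℕ} (hj : j ≠ 0) :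
    dualComponent K V 𝒱 j ≤ augIdeal 𝒱 one := fun _ hf =>
  mem_augIdeal.mpr ⟨dualComponent_le_gradedDual j hf,
    mem_dualComponent_iff.mp hf 0 hj.symm one hone0⟩

variable [DirectSum.Decomposition 𝒱]

theorem comp_gradedProj_zero_eq_zero (h𝒱0 : 𝒱 0 = K ∙ one) {f : Module.Dual K V}
    (hf : f one = 0) : f ∘ₗ gradedProj 𝒱 0 = 0 := by
  ext x
  have hx : gradedProj 𝒱 0 x ∈ K ∙ one := h𝒱0 ▸ gradedProj_apply_mem 0 x
  obtain ⟨c, hc⟩ := Submodule.mem_span_singleton.mp hx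
  simp [← hc, hf]

theorem comp_gradedProj_mem_augIdeal (h𝒱0 : 𝒱 0 = K ∙ one) {f : Module.Dual K V}
    (hf : f ∈ augIdeal 𝒱 one) (j : ℕ) : f ∘ₗ gradedProj 𝒱 j ∈ augIdeal 𝒱 one := by
  rcases eq_or_ne j 0 with rfl | hj
  · rw [comp_gradedProj_zero_eq_zero h𝒱0 (mem_augIdeal.mp hf).2]
    exact zero_mem _
  · exact dualComponent_le_augIdeal (h𝒱0 ▸ Submodule.mem_span_singleton_self one) hj
      (comp_gradedProj_mem_dualComponent f j)

theorem exists_mem_augIdeal_comp_subtype_eq (hone0 : one ∈ 𝒱 0) {s : Finset ℕ} (hs : 0 ∉ s)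
    (β : Module.Dual K ↥(⨆ j ∈ s, 𝒱 j)) :
    ∃ E ∈ augIdeal 𝒱 one, E ∘ₗ (⨆ j ∈ s, 𝒱 j).subtype = β := by
  obtain ⟨β', rfl⟩ := LinearMap.exists_extend β
  refine ⟨∑ j ∈ s, β' ∘ₗ gradedProj 𝒱 j, sum_mem fun j hj => ?_, ?_⟩
  · exact dualComponent_le_augIdeal hone0 (ne_of_mem_of_not_mem hj hs)
      (comp_gradedProj_mem_dualComponent β' j)
  · ext u
    simp [← map_sum, sum_gradedProj_of_mem_iSup u.2]

end AugmentationIdeal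

section TensorPowers

variable {K} {V W : Type} [AddCommGroup V] [Module K V] [AddCommGroup W] [Module K W]

theorem tensorSub_le_iff {p q : Submodule K V} {N : Submodule K (V ⊗[K] V)} :
    tensorSub K V p q ≤ N ↔ ∀ a ∈ p, ∀ b ∈ q, a ⊗ₜ[K] b ∈ N := by
  rw [tensorSub, TensorProduct.range_map_eq_span_tmul, Submodule.span_le]
  refine ⟨fun h a ha b hb => h ⟨⟨a, ha⟩, ⟨b, hb⟩, rfl⟩, ?_⟩
  rintro h _ ⟨a, b, rfl⟩
  exact h a a.2 b b.2

theorem tensorSub_span_singleton_left_le (e : V) (q : Submodule K V) :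
    tensorSub K V (K ∙ e) q ≤ q.map (TensorProduct.mk K V V e) :=
  tensorSub_le_iff.mpr fun a ha b hb => by
    obtain ⟨c, rfl⟩ := Submodule.mem_span_singleton.mp ha
    exact ⟨c • b, q.smul_mem c hb, by simp [TensorProduct.smul_tmul]⟩

theorem tensorSub_span_singleton_right_le (p : Submodule K V) (e : V) :
    tensorSub K V p (K ∙ e) ≤ p.map ((TensorProduct.mk K V V).flip e) :=
  tensorSub_le_iff.mpr fun a ha b hb => by
    obtain ⟨c, rfl⟩ := Submodule.mem_span_singleton.mp hb
    exact ⟨c • a, p.smul_mem c ha, by simp⟩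

theorem tensorSub_mono {p p' q q' : Submodule K V} (hp : p ≤ p') (hq : q ≤ q') :
    tensorSub K V p q ≤ tensorSub K V p' q' :=
  tensorSub_le_iff.mpr fun a ha b hb => ⟨⟨a, hp ha⟩ ⊗ₜ[K] ⟨b, hq hb⟩, rfl⟩

theorem exists_map_subtype_comp_eq {U : Submodule K V} (f : W →ₗ[K] V ⊗[K] V)
    (hf : ∀ w, f w ∈ tensorSub K V U U) :
    ∃ d : W →ₗ[K] U ⊗[K] U, TensorProduct.map U.subtype U.subtype ∘ₗ d = f := by
  obtain ⟨d, hd⟩ := Module.projective_lifting_property _ (f.codRestrict _ hf)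
    (TensorProduct.map U.subtype U.subtype).surjective_rangeRestrict
  exact ⟨d, congrArg ((LinearMap.range _).subtype ∘ₗ ·) hd⟩

noncomputable def tensorPowMap (f : V →ₗ[K] W) : (n : ℕ) → TP K V n →ₗ[K] TP K W n
  | 0 => f
  | n + 1 => TensorProduct.map (tensorPowMap f n) f

theorem tensorPowMap_comp_iterD (f : V →ₗ[K] W) {d : V →ₗ[K] V ⊗[K] V} {d' : W →ₗ[K] W ⊗[K] W}
    (hf : TensorProduct.map f f ∘ₗ d = d' ∘ₗ f) (n : ℕ) :
    tensorPowMap f n ∘ₗ iterD K V d n = iterD K W d' n ∘ₗ f := by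
  induction n with
  | zero => rfl
  | succ n ih =>
    change TensorProduct.map (tensorPowMap f n) f ∘ₗ TensorProduct.map (iterD K V d n) LinearMap.id
        ∘ₗ d = (TensorProduct.map (iterD K W d' n) LinearMap.id ∘ₗ d') ∘ₗ f
    rw [← LinearMap.comp_assoc, ← TensorProduct.map_comp, ih, LinearMap.comp_id,
      LinearMap.comp_assoc, ← hf, ← LinearMap.comp_assoc, ← TensorProduct.map_comp,
      LinearMap.id_comp]

instance finiteDimensional_TP [FiniteDimensional K V] (n : ℕ) :
    FiniteDimensional K (TP K V n) := by
  induction n with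
  | zero => exact ‹FiniteDimensional K V›
  | succ n ih => exact (inferInstance : FiniteDimensional K (TP K V n ⊗[K] V))

end TensorPowers

section GradedCoalgebra

variable {K C}

open Finset.HasAntidiagonal

def IsGradedComul (𝒞 : ℕ → Submodule K C) : Prop :=
  ∀ n : ℕ, ∀ x ∈ 𝒞 n, CoalgebraStruct.comul (R := K) x ∈
    ⨆ p ∈ antidiagonal n, tensorSub K C (𝒞 p.1) (𝒞 p.2)

variable {𝒞 : ℕ → Submodule K C} {one : C}

theorem counit_eq_one_of_comul_eq (hone : CoalgebraStruct.comul (R := K) one = one ⊗ₜ[K] one)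
    (hone_ne : one ≠ 0) : Coalgebra.counit (R := K) one = 1 := by
  have h := congrArg (TensorProduct.lid K C) (Coalgebra.rTensor_counit_comul (R := K) one)
  rw [hone, LinearMap.rTensor_tmul, TensorProduct.lid_tmul, TensorProduct.lid_tmul] at h
  exact smul_left_injective K hone_ne (show _ • one = (1 : K) • one by rw [h, one_smul])

variable [DirectSum.Decomposition 𝒞]

theorem comul_component_zero_left (hC0 : 𝒞 0 = K ∙ one)
    (hε : Coalgebra.counit (R := K) one = 1) {j : ℕ} {x : C} (hx : x ∈ 𝒞 j)
    {t : ℕ × ℕ → C ⊗[K] C} (ht : ∀ p, t p ∈ tensorSub K C (𝒞 p.1) (𝒞 p.2))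
    (hsum : ∑ p ∈ antidiagonal j, t p = CoalgebraStruct.comul (R := K) x) :
    t (0, j) = one ⊗ₜ[K] x := by
  set F := (TensorProduct.lid K C).toLinearMap ∘ₗ
    (Coalgebra.counit (R := K) (A := C)).rTensor C
  have hF : ∀ p : ℕ × ℕ, tensorSub K C (𝒞 p.1) (𝒞 p.2) ≤ (𝒞 p.2).comap F := fun p =>
    tensorSub_le_iff.mpr fun a _ b hb => by
      simpa [F] using (𝒞 p.2).smul_mem (Coalgebra.counit (R := K) a) hb
  have hFx : ∑ p ∈ antidiagonal j, F (t p) = x := by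
    simp [F, ← map_sum, hsum, Coalgebra.rTensor_counit_comul]
  -- `x = ∑ (ε ⊗ id) (t p)` with `(ε ⊗ id) (t p) ∈ C_{p.2}`: its degree-`j` part is
  -- `(ε ⊗ id) (t (0, j))`, while `t (0, j) ∈ K·1 ⊗ Cⱼ`.
  obtain ⟨y, -, hy⟩ := tensorSub_span_singleton_left_le one (𝒞 j) (hC0 ▸ ht (0, j))
  have hinj : Set.InjOn Prod.snd (antidiagonal j : Set (ℕ × ℕ)) :=
    fun p hp q hq h => (antidiagonal_congr' hp hq).mpr h
  have hFy := gradedProj_sum_of_injOn hinj (fun p _ => hF p (ht p)) (by simp : (0, j) ∈ _)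
  have hFone : F (one ⊗ₜ[K] y) = y := by simp [F, hε]
  rw [hFx, gradedProj_of_mem_same hx, ← hy, TensorProduct.mk_apply, hFone] at hFy
  rw [← hy, hFy, TensorProduct.mk_apply]

theorem comul_component_zero_right (hC0 : 𝒞 0 = K ∙ one)
    (hε : Coalgebra.counit (R := K) one = 1) {j : ℕ} {x : C} (hx : x ∈ 𝒞 j)
    {t : ℕ × ℕ → C ⊗[K] C} (ht : ∀ p, t p ∈ tensorSub K C (𝒞 p.1) (𝒞 p.2))
    (hsum : ∑ p ∈ antidiagonal j, t p = CoalgebraStruct.comul (R := K) x) :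
    t (j, 0) = x ⊗ₜ[K] one := by
  set G := (TensorProduct.rid K C).toLinearMap ∘ₗ
    (Coalgebra.counit (R := K) (A := C)).lTensor C
  have hG : ∀ p : ℕ × ℕ, tensorSub K C (𝒞 p.1) (𝒞 p.2) ≤ (𝒞 p.1).comap G := fun p =>
    tensorSub_le_iff.mpr fun a ha b _ => by
      simpa [G] using (𝒞 p.1).smul_mem (Coalgebra.counit (R := K) b) ha
  have hGx : ∑ p ∈ antidiagonal j, G (t p) = x := by
    simp [G, ← map_sum, hsum, Coalgebra.lTensor_counit_comul]
  obtain ⟨y, -, hy⟩ := tensorSub_span_singleton_right_le (𝒞 j) one (hC0 ▸ ht (j, 0))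
  have hinj : Set.InjOn Prod.fst (antidiagonal j : Set (ℕ × ℕ)) :=
    fun p hp q hq h => (antidiagonal_congr hp hq).mpr h
  have hGy := gradedProj_sum_of_injOn hinj (fun p _ => hG p (ht p)) (by simp : (j, 0) ∈ _)
  have hGone : G (y ⊗ₜ[K] one) = y := by simp [G, hε]
  rw [hGx, gradedProj_of_mem_same hx, ← hy, LinearMap.flip_apply, TensorProduct.mk_apply,
    hGone] at hGy
  rw [← hy, hGy, LinearMap.flip_apply, TensorProduct.mk_apply]

theorem redComul_mem_iSup_tensorSub (hcomul : IsGradedComul 𝒞) (hC0 : 𝒞 0 = K ∙ one)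
    (hε : Coalgebra.counit (R := K) one = 1) {j : ℕ} (hj : j ≠ 0) {x : C} (hx : x ∈ 𝒞 j) :
    redComul K C one x ∈ ⨆ p ∈ (antidiagonal j).filter (fun p => p.1 ≠ 0 ∧ p.2 ≠ 0),
      tensorSub K C (𝒞 p.1) (𝒞 p.2) := by
  obtain ⟨t, ht⟩ := (Submodule.mem_iSup_finset_iff_exists_sum _ _).mp (hcomul j x hx)
  have hends : (antidiagonal j).filter (fun p => ¬(p.1 ≠ 0 ∧ p.2 ≠ 0)) = {(0, j), (j, 0)} := by
    ext ⟨a, b⟩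
    simp only [Finset.mem_filter, mem_antidiagonal, Finset.mem_insert, Finset.mem_singleton,
      Prod.mk.injEq]
    omega
  have hred : redComul K C one x =
      ∑ p ∈ (antidiagonal j).filter (fun p => p.1 ≠ 0 ∧ p.2 ≠ 0), (t p : C ⊗[K] C) := by
    rw [redComul, LinearMap.sub_apply, LinearMap.sub_apply, ← ht,
      ← Finset.sum_filter_add_sum_filter_not _ (fun p => p.1 ≠ 0 ∧ p.2 ≠ 0), hends,
      Finset.sum_pair (by simp [hj]), comul_component_zero_left hC0 hε hx
        (fun p => (t p).2) ht, comul_component_zero_right hC0 hε hx (fun p => (t p).2) ht]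
    simp only [TensorProduct.mk_apply, LinearMap.flip_apply]
    abel
  rw [hred]
  exact sum_mem fun p hp => Submodule.mem_iSup_of_mem p (Submodule.mem_iSup_of_mem hp (t p).2)

theorem iSup_Ioo_le_comap_redComul (hcomul : IsGradedComul 𝒞) (hC0 : 𝒞 0 = K ∙ one)
    (hε : Coalgebra.counit (R := K) one = 1) (N : ℕ) :
    ⨆ j ∈ Finset.Ioo 0 N, 𝒞 j ≤ (tensorSub K C (⨆ j ∈ Finset.Ioo 0 N, 𝒞 j)
      (⨆ j ∈ Finset.Ioo 0 N, 𝒞 j)).comap (redComul K C one) := by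
  refine iSup₂_le fun j hj x hx => ?_
  obtain ⟨hj0, hjN⟩ := Finset.mem_Ioo.mp hj
  have hle : ⨆ p ∈ (antidiagonal j).filter (fun p => p.1 ≠ 0 ∧ p.2 ≠ 0),
      tensorSub K C (𝒞 p.1) (𝒞 p.2) ≤
      tensorSub K C (⨆ j ∈ Finset.Ioo 0 N, 𝒞 j) (⨆ j ∈ Finset.Ioo 0 N, 𝒞 j) := by
    refine iSup₂_le fun p hp => ?_
    obtain ⟨hpj, hp1, hp2⟩ : p.1 + p.2 = j ∧ p.1 ≠ 0 ∧ p.2 ≠ 0 := by simpa using hp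
    exact tensorSub_mono
      (le_iSup₂ (f := fun j _ => 𝒞 j) p.1 (Finset.mem_Ioo.mpr ⟨by omega, by omega⟩))
      (le_iSup₂ (f := fun j _ => 𝒞 j) p.2 (Finset.mem_Ioo.mpr ⟨by omega, by omega⟩))
  exact hle (redComul_mem_iSup_tensorSub hcomul hC0 hε hj0.ne' hx)

end GradedCoalgebra

section Convolution

variable {K C}

open Finset.HasAntidiagonal

variable {𝒞 : ℕ → Submodule K C} {one : C}

theorem convL_apply_of_comul_eq (hone : CoalgebraStruct.comul (R := K) one = one ⊗ₜ[K] one)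
    (f g : Module.Dual K C) : convL K C f g one = f one * g one := by
  simp [convL, hone]

theorem convL_apply_eq_redComul {f g : Module.Dual K C} (hf : f one = 0) (hg : g one = 0)
    (x : C) : convL K C f g x =
      LinearMap.mul' K K (TensorProduct.map f g (redComul K C one x)) := by
  simp [convL, redComul, hf, hg]

theorem convL_apply_eq_iterD {V : Type} [AddCommGroup V] [Module K V]
    {d : V →ₗ[K] V ⊗[K] V} {ι : V →ₗ[K] C}
    (hd : TensorProduct.map ι ι ∘ₗ d = redComul K C one ∘ₗ ι) {G E : Module.Dual K C}
    (hG : G one = 0) (hE : E one = 0) {n : ℕ} {γ : Module.Dual K (TP K V n)}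
    (hγ : G ∘ₗ ι = γ ∘ₗ iterD K V d n) (v : V) :
    convL K C G E (ι v) = LinearMap.mul' K K (TensorProduct.map γ (E ∘ₗ ι)
      (TensorProduct.map (iterD K V d n) LinearMap.id (d v))) := by
  have hsplit : TensorProduct.map G E ∘ₗ TensorProduct.map ι ι =
      TensorProduct.map γ (E ∘ₗ ι) ∘ₗ TensorProduct.map (iterD K V d n) LinearMap.id := by
    rw [← TensorProduct.map_comp, ← TensorProduct.map_comp, hγ, LinearMap.comp_id]
  rw [convL_apply_eq_redComul hG hE, ← LinearMap.comp_apply _ ι, ← hd, LinearMap.comp_apply,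
    ← LinearMap.comp_apply (TensorProduct.map G E), hsplit, LinearMap.comp_apply]

theorem convL_mem_dualComponent (hcomul : IsGradedComul 𝒞) {f g : Module.Dual K C} {p q : ℕ}
    (hf : f ∈ dualComponent K C 𝒞 p) (hg : g ∈ dualComponent K C 𝒞 q) :
    convL K C f g ∈ dualComponent K C 𝒞 (p + q) := by
  refine mem_dualComponent_iff.mpr fun m hm x hx => ?_
  have hker : ⨆ r ∈ antidiagonal m, tensorSub K C (𝒞 r.1) (𝒞 r.2) ≤
      LinearMap.ker (LinearMap.mul' K K ∘ₗ TensorProduct.map f g) := by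
    refine iSup₂_le fun r hr => tensorSub_le_iff.mpr fun a ha b hb => ?_
    have hr : r.1 + r.2 = m := mem_antidiagonal.mp hr
    rcases ne_or_eq r.1 p with h1 | rfl
    · simp [mem_dualComponent_iff.mp hf r.1 h1 a ha]
    · simp [mem_dualComponent_iff.mp hg r.2 (by omega) b hb]
  exact hker (hcomul m x hx)

theorem map₂_convL_gradedDual_le (hcomul : IsGradedComul 𝒞) :
    Submodule.map₂ (convL K C) (gradedDual K C 𝒞) (gradedDual K C 𝒞) ≤ gradedDual K C 𝒞 := by
  rw [gradedDual, Submodule.map₂_iSup_left]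
  refine iSup_le fun p => ?_
  rw [Submodule.map₂_iSup_right]
  exact iSup_le fun q => Submodule.map₂_le.mpr fun f hf g hg =>
    dualComponent_le_gradedDual (p + q) (convL_mem_dualComponent hcomul hf hg)

theorem Mpow_succ' (n : ℕ) : Mpow K C 𝒞 one (n + 1) =
    Submodule.map₂ (convL K C) (Mpow K C 𝒞 one n) (augIdeal 𝒞 one) := by
  let e := WithConv.linearEquiv K (Module.Dual K C)
  have hsymm : ∀ P : Submodule K (WithConv (Module.Dual K C)),
      (P.map e.toLinearMap).map e.symm.toLinearMap = P := fun P => by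
    rw [← Submodule.map_comp]
    simp
  have hmap₂ : ∀ P Q : Submodule K (Module.Dual K C), Submodule.map₂ (convL K C) P Q =
      (P.map e.symm.toLinearMap * Q.map e.symm.toLinearMap).map e.toLinearMap := fun P Q => by
    rw [Submodule.mul_eq_map₂, Submodule.map_map₂, Submodule.map₂_map_map]
    rfl
  have hpow : ∀ n, Mpow K C 𝒞 one n =
      ((augIdeal 𝒞 one).map e.symm.toLinearMap ^ (n + 1)).map e.toLinearMap := by
    intro n
    induction n with
    | zero =>
      rw [zero_add, Submodule.pow_one, ← Submodule.map_comp]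
      simp [Mpow, augIdeal]
    | succ n ih =>
      rw [Mpow, ← augIdeal, hmap₂, ih, hsymm, ← Submodule.pow_succ' _ n.succ_ne_zero]
  rw [hmap₂, hpow, hpow, hsymm, Submodule.pow_succ]

theorem apply_eq_zero_of_mem_Mpow (hone : CoalgebraStruct.comul (R := K) one = one ⊗ₜ[K] one) :
    ∀ {n : ℕ} {f : Module.Dual K C}, f ∈ Mpow K C 𝒞 one n → f one = 0
  | 0, _, hf => (mem_augIdeal.mp hf).2
  | n + 1, _, hf => by
    have hle : Mpow K C 𝒞 one (n + 1) ≤ LinearMap.ker (Module.Dual.eval K C one) :=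
      Submodule.map₂_le.mpr fun E _ G hG => by
        simp [convL_apply_of_comul_eq hone, apply_eq_zero_of_mem_Mpow hone hG]
    simpa using hle hf

theorem Mpow_le_dualAnnihilator (hcomul : IsGradedComul 𝒞)
    (hone : CoalgebraStruct.comul (R := K) one = one ⊗ₜ[K] one) (n : ℕ) :
    Mpow K C 𝒞 one n ≤ gradedDual K C 𝒞 ⊓
      (K ∙ one ⊔ LinearMap.ker (iterD K C (redComul K C one) n)).dualAnnihilator := by
  induction n with
  | zero =>
    have hker : LinearMap.ker (iterD K C (redComul K C one) 0) = ⊥ := LinearMap.ker_id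
    rw [hker, sup_bot_eq]
    rfl
  | succ n ih =>
    rw [Mpow_succ', Submodule.dualAnnihilator_sup_eq]
    refine Submodule.map₂_le.mpr fun G hG E hE => ?_
    obtain ⟨hGd, hGann⟩ := Submodule.mem_inf.mp (ih hG)
    rw [Submodule.dualAnnihilator_sup_eq] at hGann
    obtain ⟨Ĝ, rfl⟩ : G ∈ LinearMap.range (iterD K C (redComul K C one) n).dualMap := by
      rw [LinearMap.range_dualMap_eq_dualAnnihilator_ker]
      exact hGann.2
    have hG1 := apply_eq_zero_of_mem_Mpow hone hG
    have hE1 := (mem_augIdeal.mp hE).2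
    have hconv := convL_apply_eq_iterD (ι := LinearMap.id) (by simp) hG1 hE1 rfl
    refine ⟨map₂_convL_gradedDual_le hcomul (Submodule.apply_mem_map₂ _ hGd hE.1),
      mem_dualAnnihilator_span_singleton.mpr ?_, (Submodule.mem_dualAnnihilator _).mpr ?_⟩
    · rw [convL_apply_of_comul_eq hone, hG1, zero_mul]
    · intro x hx
      have hx' : TensorProduct.map (iterD K C (redComul K C one) n) LinearMap.id
          (redComul K C one x) = 0 := hx
      rw [← LinearMap.id_apply (R := K) x, hconv, LinearMap.id_apply, hx', map_zero, map_zero]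

theorem range_dualMap_iterD_le_map_Mpow {V : Type} [AddCommGroup V] [Module K V]
    [FiniteDimensional K V] {d : V →ₗ[K] V ⊗[K] V} {ι : V →ₗ[K] C}
    (hd : TensorProduct.map ι ι ∘ₗ d = redComul K C one ∘ₗ ι)
    (hone : CoalgebraStruct.comul (R := K) one = one ⊗ₜ[K] one)
    (hext : ∀ β : Module.Dual K V, ∃ E ∈ augIdeal 𝒞 one, E ∘ₗ ι = β) (n : ℕ) :
    LinearMap.range (iterD K V d n).dualMap ≤ (Mpow K C 𝒞 one n).map ι.dualMap := by
  induction n with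
  | zero =>
    rintro _ ⟨ψ, rfl⟩
    exact hext ψ
  | succ n ih =>
    show LinearMap.range (TensorProduct.map (iterD K V d n) LinearMap.id ∘ₗ d).dualMap ≤ _
    rintro _ ⟨ψ, rfl⟩
    have hsurj : Function.Surjective (TensorProduct.dualDistrib K (TP K V n) V) :=
      (TensorProduct.dualDistribEquiv K (TP K V n) V).surjective
    obtain ⟨w, rfl⟩ := hsurj ψ
    induction w using TensorProduct.induction_on with
    | zero =>
      rw [map_zero, map_zero]
      exact zero_mem _
    | add w w' hw hw' =>
      rw [map_add, map_add]
      exact add_mem hw hw'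
    | tmul γ β =>
      obtain ⟨G, hG, hGγ⟩ := ih ⟨γ, rfl⟩
      obtain ⟨E, hE, rfl⟩ := hext β
      refine ⟨convL K C G E, by rw [Mpow_succ']; exact Submodule.apply_mem_map₂ _ hG hE, ?_⟩
      ext v
      rw [LinearMap.dualMap_apply, convL_apply_eq_iterD hd (apply_eq_zero_of_mem_Mpow hone hG)
        (mem_augIdeal.mp hE).2 hGγ, LinearMap.dualMap_apply, LinearMap.comp_apply]
      generalize TensorProduct.map (iterD K V d n) LinearMap.id (d v) = t
      induction t using TensorProduct.induction_on with
      | zero => simp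
      | tmul a b => simp [TensorProduct.dualDistrib_apply]
      | add t t' ht ht' => simp only [map_add, ht, ht']

variable [DirectSum.Decomposition 𝒞]

theorem comp_gradedProj_mem_map₂_convL (hcomul : IsGradedComul 𝒞)
    {A B : Submodule K (Module.Dual K C)} (hA : A ≤ gradedDual K C 𝒞) (hB : B ≤ gradedDual K C 𝒞)
    (hAπ : ∀ f ∈ A, ∀ j, f ∘ₗ gradedProj 𝒞 j ∈ A) (hBπ : ∀ g ∈ B, ∀ j, g ∘ₗ gradedProj 𝒞 j ∈ B)
    {F : Module.Dual K C} (hF : F ∈ Submodule.map₂ (convL K C) A B) (j : ℕ) :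
    F ∘ₗ gradedProj 𝒞 j ∈ Submodule.map₂ (convL K C) A B := by
  suffices h : Submodule.map₂ (convL K C) A B ≤
      (Submodule.map₂ (convL K C) A B).comap (gradedProj 𝒞 j).dualMap from h hF
  refine Submodule.map₂_le.mpr fun f hf g hg => ?_
  obtain ⟨N, hfN⟩ := exists_eq_sum_range_comp_gradedProj (hA hf)
  obtain ⟨N', hgN⟩ := exists_eq_sum_range_comp_gradedProj (hB hg)
  rw [hfN, hgN]
  simp only [map_sum, LinearMap.sum_apply]
  refine sum_mem fun b _ => sum_mem fun a _ => ?_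
  have hab := convL_mem_dualComponent hcomul (comp_gradedProj_mem_dualComponent f a)
    (comp_gradedProj_mem_dualComponent g b)
  rw [Submodule.mem_comap, LinearMap.dualMap_apply']
  rcases eq_or_ne (a + b) j with rfl | hne
  · rw [comp_gradedProj_of_mem_dualComponent hab]
    exact Submodule.apply_mem_map₂ _ (hAπ f hf a) (hBπ g hg b)
  · rw [comp_gradedProj_of_mem_dualComponent_of_ne hab hne]
    exact zero_mem _

theorem comp_gradedProj_mem_Mpow (hcomul : IsGradedComul 𝒞)
    (hone : CoalgebraStruct.comul (R := K) one = one ⊗ₜ[K] one) (hC0 : 𝒞 0 = K ∙ one) (n : ℕ) :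
    ∀ F ∈ Mpow K C 𝒞 one n, ∀ j, F ∘ₗ gradedProj 𝒞 j ∈ Mpow K C 𝒞 one n := by
  induction n with
  | zero => exact fun F hF => comp_gradedProj_mem_augIdeal hC0 hF
  | succ n ih =>
    exact fun F hF => comp_gradedProj_mem_map₂_convL hcomul inf_le_left
      (fun f hf => (Mpow_le_dualAnnihilator hcomul hone n hf).1)
      (fun f hf => comp_gradedProj_mem_augIdeal hC0 hf) ih hF

theorem exists_mem_Mpow_comp_subtype_eq [∀ j, FiniteDimensional K (𝒞 j)]
    (hcomul : IsGradedComul 𝒞) (hC0 : 𝒞 0 = K ∙ one) (hε : Coalgebra.counit (R := K) one = 1)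
    (hone : CoalgebraStruct.comul (R := K) one = one ⊗ₜ[K] one) (N n : ℕ) {φ : Module.Dual K C}
    (hφ : φ ∈ (LinearMap.ker (iterD K C (redComul K C one) n)).dualAnnihilator) :
    ∃ F ∈ Mpow K C 𝒞 one n, F ∘ₗ (⨆ j ∈ Finset.Ioo 0 N, 𝒞 j).subtype =
      φ ∘ₗ (⨆ j ∈ Finset.Ioo 0 N, 𝒞 j).subtype := by
  have : FiniteDimensional K ↥(⨆ j ∈ Finset.Ioo 0 N, 𝒞 j) := by
    rw [← Finset.sup_eq_iSup]
    exact Submodule.finiteDimensional_finset_sup _ _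
  set U := ⨆ j ∈ Finset.Ioo 0 N, 𝒞 j
  obtain ⟨d, hd⟩ := exists_map_subtype_comp_eq (redComul K C one ∘ₗ U.subtype)
    fun u => iSup_Ioo_le_comap_redComul hcomul hC0 hε N u.2
  have hφU : U.subtype.dualMap φ ∈ LinearMap.range (iterD K U d n).dualMap := by
    rw [LinearMap.range_dualMap_eq_dualAnnihilator_ker, Submodule.mem_dualAnnihilator]
    intro v hv
    have hnat := LinearMap.congr_fun (tensorPowMap_comp_iterD U.subtype hd n) v
    rw [LinearMap.comp_apply, LinearMap.mem_ker.mp hv, map_zero] at hnat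
    exact (Submodule.mem_dualAnnihilator φ).mp hφ _ (LinearMap.mem_ker.mpr hnat.symm)
  have hext (β : Module.Dual K U) : ∃ E ∈ augIdeal 𝒞 one, E ∘ₗ U.subtype = β :=
    exists_mem_augIdeal_comp_subtype_eq (hC0 ▸ Submodule.mem_span_singleton_self one)
      (by simp) β
  exact range_dualMap_iterD_le_map_Mpow hd hone hext n hφU

theorem mem_Mpow_of_mem_dualAnnihilator [∀ j, FiniteDimensional K (𝒞 j)]
    (hcomul : IsGradedComul 𝒞) (hC0 : 𝒞 0 = K ∙ one) (hε : Coalgebra.counit (R := K) one = 1)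
    (hone : CoalgebraStruct.comul (R := K) one = one ⊗ₜ[K] one) (n : ℕ) {φ : Module.Dual K C}
    (hφ : φ ∈ gradedDual K C 𝒞 ⊓
      (K ∙ one ⊔ LinearMap.ker (iterD K C (redComul K C one) n)).dualAnnihilator) :
    φ ∈ Mpow K C 𝒞 one n := by
  rw [Submodule.dualAnnihilator_sup_eq] at hφ
  obtain ⟨hφg, hφ1, hφker⟩ := hφ
  obtain ⟨N, hN⟩ := exists_eq_sum_range_comp_gradedProj hφg
  obtain ⟨F, hF, hFφ⟩ := exists_mem_Mpow_comp_subtype_eq hcomul hC0 hε hone N n hφker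
  have hcomp : ∀ j ∈ Finset.range N, φ ∘ₗ gradedProj 𝒞 j = F ∘ₗ gradedProj 𝒞 j := by
    intro j hj
    rcases eq_or_ne j 0 with rfl | hj0
    · rw [comp_gradedProj_zero_eq_zero hC0 (mem_dualAnnihilator_span_singleton.mp hφ1),
        comp_gradedProj_zero_eq_zero hC0 (apply_eq_zero_of_mem_Mpow hone hF)]
    · ext x
      have hx : gradedProj 𝒞 j x ∈ ⨆ j ∈ Finset.Ioo 0 N, 𝒞 j :=
        le_iSup₂ (f := fun j _ => 𝒞 j) j
          (Finset.mem_Ioo.mpr ⟨Nat.pos_of_ne_zero hj0, Finset.mem_range.mp hj⟩)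
          (gradedProj_apply_mem j x)
      exact (LinearMap.congr_fun hFφ ⟨_, hx⟩).symm
  rw [hN, Finset.sum_congr rfl hcomp]
  exact sum_mem fun j _ => comp_gradedProj_mem_Mpow hcomul hone hC0 n F hF j

end Convolution

/-- For a graded coalgebra `C` with `dim C₀ = 1` and finite-dimensional
components, the orthogonal of `C_{deg_p ≤ n} = K·1 ⊕ Ker Δ̃ⁿ` inside `C^{*g}` is
`M_*^{n+1}`, where `M_* = (1)^⊥` is the augmentation ideal of the dual algebra. -/
theorem stmt_8 (𝒞 : ℕ → Submodule K C) [DirectSum.Decomposition 𝒞]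
    [∀ n, FiniteDimensional K (𝒞 n)]
    (hcomul : ∀ n : ℕ, ∀ x ∈ 𝒞 n,
      CoalgebraStruct.comul (R := K) x
        ∈ ⨆ p ∈ Finset.HasAntidiagonal.antidiagonal n, tensorSub K C (𝒞 p.1) (𝒞 p.2))
    (h0 : Module.finrank K (𝒞 0) = 1)
    (one : C) (hone : CoalgebraStruct.comul (R := K) one = one ⊗ₜ[K] one)
    (hone0 : one ∈ 𝒞 0) (hone_ne : one ≠ 0) :
    ∀ n : ℕ,
      gradedDual K C 𝒞 ⊓ Submodule.dualAnnihilator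
          (Submodule.span K {one} ⊔ LinearMap.ker (iterD K C (redComul K C one) n))
        = Mpow K C 𝒞 one n := by
  intro n
  have hC0 : 𝒞 0 = K ∙ one := eq_span_singleton_of_mem_of_finrank_eq_one h0 hone0 hone_ne
  have hε := counit_eq_one_of_comul_eq hone hone_ne
  exact le_antisymm (fun φ hφ => mem_Mpow_of_mem_dualAnnihilator hcomul hC0 hε hone n hφ)
    (Mpow_le_dualAnnihilator hcomul hone n)
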